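/- Let 0 < ε ≤ 1 and 0 < δ ≤ 1 and let V_A, V_S be finite sets. There exists a constant C > 0, depending only on card(V_A), card(V_S), ε and δ, such that for every measure space (X, m) with m(X) = 1 and every pair of ε-granular data maps f, f' for which the set 𝒮_δ of sequents satisfying the δ-condition is the same under f and f', one has Σ_{s∈𝒮_δ} λ(I_s(ℱ_δ(f)) Δ I_s(ℱ_δ(f'))) ≤ C · data-dist(f, f'), where λ denotes Lebesgue measure on [0,1]. -/

import Mathlib

open MeasureTheory Set

/-- `q_f(s)`: the measure of the intersection `⋂_{a ∈ Γ} f(a)` (empty intersection = `X`). -/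
noncomputable def qOf {A B X : Type*} [MeasurableSpace X] (μ : Measure X)
    (f : A ⊕ B → Set X) (Γ : Finset A) : ℝ :=
  (μ (⋂ a ∈ Γ, f (Sum.inl a))).toReal

/-- `p_f(s)`: the measure of `⋂_{a ∈ Γ} f(a) ∩ ⋃_{x ∈ Δ} f(x)` (empty union = `∅`). -/
noncomputable def pOf {A B X : Type*} [MeasurableSpace X] (μ : Measure X)
    (f : A ⊕ B → Set X) (s : Finset A × Finset B) : ℝ :=
  (μ ((⋂ a ∈ s.1, f (Sum.inl a)) ∩ ⋃ x ∈ s.2, f (Sum.inr x))).toReal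

/-- Membership of the sequent `s` in the poset `𝒮'_t(f)` of Filtration I:
`s ∈ 𝒮'_t(f)` iff `p_f(s) ≥ (1 − t) · q_f(s)`. -/
def memFiltI {A B X : Type*} [MeasurableSpace X] (μ : Measure X)
    (f : A ⊕ B → Set X) (t : ℝ) (s : Finset A × Finset B) : Prop :=
  pOf μ f s ≥ (1 - t) * qOf μ f s.1

/-- The birth time `t(s,f) = inf {t ∈ [0,1] : s ∈ 𝒮'_t(f)}`. -/
noncomputable def birthTime {A B X : Type*} [MeasurableSpace X] (μ : Measure X)
    (f : A ⊕ B → Set X) (s : Finset A × Finset B) : ℝ :=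
  sInf {t : ℝ | t ∈ Icc (0:ℝ) 1 ∧ memFiltI μ f t s}

/-- The distance between two data maps:
`data-dist(f,f') = Σ_{v ∈ V_A ∪ V_S} m(f(v) Δ f'(v))`. -/
noncomputable def dataDist {A B X : Type*} [Fintype A] [Fintype B] [MeasurableSpace X]
    (μ : Measure X) (f f' : A ⊕ B → Set X) : ℝ :=
  ∑ v : A ⊕ B, (μ (symmDiff (f v) (f' v))).toReal

/-- A data map `f` is `ε`-granular if `m(f(v)) > ε` for every variable `v`. -/
def Granular {A B X : Type*} [MeasurableSpace X] (μ : Measure X)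
    (f : A ⊕ B → Set X) (ε : ℝ) : Prop :=
  ∀ v : A ⊕ B, ε < (μ (f v)).toReal

/-- The sequent `s = (Γ, Δ)` satisfies the `δ`-condition under `f`:
`m(⋂_{b ∈ Γ} f(b)) > δ · m(f(a))` for every `a ∈ Γ`. -/
def DeltaCond {A B X : Type*} [MeasurableSpace X] (μ : Measure X)
    (f : A ⊕ B → Set X) (δ : ℝ) (s : Finset A × Finset B) : Prop :=
  ∀ a ∈ s.1, δ * (μ (f (Sum.inl a))).toReal < qOf μ f s.1

/-- `p` is a minimal element of the subset `Q` of a poset. -/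
def IsMinimalIn {P : Type*} [PartialOrder P] (Q : Set P) (p : P) : Prop :=
  p ∈ Q ∧ ∀ q ∈ Q, q ≤ p → q = p

/-- The bar `I_s(ℱ_δ(f))` of the sequent `s` in the sub-filtration `ℱ_δ(f)` of Filtration I:
its `t`-th poset is `𝒮'_t(f) ∩ 𝒮_δ(f)` with the order induced from `𝒮`. -/
def barDelta {A B X : Type*} [MeasurableSpace X] (μ : Measure X)
    (f : A ⊕ B → Set X) (δ : ℝ) (s : Finset A × Finset B) : Set ℝ :=
  {t : ℝ | t ∈ Icc (0:ℝ) 1 ∧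
    IsMinimalIn {s' : Finset A × Finset B | memFiltI μ f t s' ∧ DeltaCond μ f δ s'} s}

/-!
A sequent `s` enters Filtration I at time `1 - p_f(s)/q_f(s)`. On `𝒮_δ` the δ-condition and
ε-granularity give `q_f(s) ≥ δε`, and `p_f(s)`, `q_f(s)` move by at most `data-dist(f,f')` when
`f` is replaced by `f'`, so the two entry times differ by at most `2·data-dist(f,f')/(δε)`.
At any time where no sequent of `𝒮_δ` has entered one filtration but not the other, the two
posets of `ℱ_δ` coincide and so do their minimal elements. Hence every bar changes on a set of
measure at most `N·2·data-dist(f,f')/(δε)`, `N` the number of sequents, and `C = 2N²/(δε)`.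
-/

open scoped symmDiff

section MeasureBounds

variable {X : Type*} [MeasurableSpace X] {μ : Measure X} [IsFiniteMeasure μ]

lemma measureReal_le_add_measureReal_symmDiff (s t : Set X) :
    μ.real s ≤ μ.real t + μ.real (s ∆ t) :=
  (measureReal_mono (le_symmDiff_sup_right s t)).trans
    ((measureReal_union_le _ _).trans_eq (add_comm _ _))

lemma abs_measureReal_sub_le_measureReal_symmDiff (s t : Set X) :
    |μ.real s - μ.real t| ≤ μ.real (s ∆ t) := by
  have hst := measureReal_le_add_measureReal_symmDiff (μ := μ) s t
  have hts := measureReal_le_add_measureReal_symmDiff (μ := μ) t s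
  rw [symmDiff_comm] at hts
  exact abs_sub_le_iff.2 ⟨by linarith, by linarith⟩

lemma abs_measureReal_sub_le_sum_symmDiff {ι : Type*} [Fintype ι] (f f' : ι → Set X)
    {S S' : Set X} (h : ∀ x, (∀ v, x ∈ f v ↔ x ∈ f' v) → (x ∈ S ↔ x ∈ S')) :
    |μ.real S - μ.real S'| ≤ ∑ v, μ.real (f v ∆ f' v) := by
  have hsub : S ∆ S' ⊆ ⋃ v, f v ∆ f' v := by
    intro x hx
    by_contra hx'
    simp only [mem_iUnion, mem_symmDiff, not_exists] at hx hx'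
    have := h x fun v => by have := hx' v; tauto
    tauto
  exact (abs_measureReal_sub_le_measureReal_symmDiff S S').trans
    ((measureReal_mono hsub).trans (measureReal_iUnion_fintype_le _))

end MeasureBounds

lemma abs_div_sub_div_le {p q p' q' c K : ℝ} (hp : 0 ≤ p) (hpq : p ≤ q) (hq : 0 < q)
    (hc : 0 < c) (hq' : c ≤ q') (hpK : |p - p'| ≤ K) (hqK : |q - q'| ≤ K) :
    |p / q - p' / q'| ≤ 2 * K / c := by
  have hq'0 : 0 < q' := hc.trans_le hq'
  have hK : 0 ≤ K := (abs_nonneg _).trans hpK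
  have hnum : |p * q' - q * p'| ≤ 2 * K * q := by
    rw [show p * q' - q * p' = q * (p - p') - p * (q - q') by ring]
    calc _ ≤ |q * (p - p')| + |p * (q - q')| := abs_sub _ _
      _ = q * |p - p'| + p * |q - q'| := by
        rw [abs_mul, abs_mul, abs_of_pos hq, abs_of_nonneg hp]
      _ ≤ q * K + q * K := by gcongr
      _ = 2 * K * q := by ring
  calc |p / q - p' / q'| = |p * q' - q * p'| / (q * q') := by
        rw [div_sub_div _ _ hq.ne' hq'0.ne', abs_div, abs_of_pos (mul_pos hq hq'0)]
    _ ≤ 2 * K * q / (q * q') := by gcongr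
    _ = 2 * K / q' := by field_simp
    _ ≤ 2 * K / c := by gcongr

lemma volume_setOf_not_le_iff_le (a b : ℝ) :
    volume {t : ℝ | ¬(a ≤ t ↔ b ≤ t)} = ENNReal.ofReal |a - b| := by
  have hIco : {t : ℝ | ¬(a ≤ t ↔ b ≤ t)} = Ico (min a b) (max a b) := by
    ext t
    simp only [mem_ofPred_eq, mem_Ico, min_le_iff, lt_max_iff]
    grind
  rw [hIco, Real.volume_Ico, max_sub_min_eq_abs']

section DataMaps

variable {A B X : Type*} [MeasurableSpace X] {μ : Measure X} {f f' : A ⊕ B → Set X}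

lemma dataDist_nonneg [Fintype A] [Fintype B] : 0 ≤ dataDist μ f f' :=
  Finset.sum_nonneg fun _ _ => ENNReal.toReal_nonneg

lemma abs_qOf_sub_le_dataDist [Fintype A] [Fintype B] [IsFiniteMeasure μ] (Γ : Finset A) :
    |qOf μ f Γ - qOf μ f' Γ| ≤ dataDist μ f f' :=
  abs_measureReal_sub_le_sum_symmDiff f f' fun x hx => by simp only [mem_iInter, hx]

lemma abs_pOf_sub_le_dataDist [Fintype A] [Fintype B] [IsFiniteMeasure μ]
    (s : Finset A × Finset B) : |pOf μ f s - pOf μ f' s| ≤ dataDist μ f f' :=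
  abs_measureReal_sub_le_sum_symmDiff f f' fun x hx => by
    simp only [mem_inter_iff, mem_iInter, mem_iUnion, hx]

lemma pOf_le_qOf [IsFiniteMeasure μ] (s : Finset A × Finset B) : pOf μ f s ≤ qOf μ f s.1 :=
  measureReal_mono inter_subset_left

lemma mul_le_qOf_of_deltaCond [IsProbabilityMeasure μ] {ε δ : ℝ} (hε1 : ε ≤ 1) (hδ0 : 0 ≤ δ)
    (hδ1 : δ ≤ 1) (hf : Granular μ f ε) {s : Finset A × Finset B} (hs : DeltaCond μ f δ s) :
    δ * ε ≤ qOf μ f s.1 := by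
  rcases s.1.eq_empty_or_nonempty with hΓ | ⟨a, ha⟩
  · have hq : qOf μ f s.1 = 1 := by simp [qOf, hΓ]
    rw [hq]
    nlinarith
  · nlinarith [hs a ha, hf (Sum.inl a)]

lemma memFiltI_iff {t : ℝ} {s : Finset A × Finset B} (hq : 0 < qOf μ f s.1) :
    memFiltI μ f t s ↔ 1 - pOf μ f s / qOf μ f s.1 ≤ t := by
  rw [memFiltI, ge_iff_le, ← le_div_iff₀ hq]
  constructor <;> intro h <;> linarith

def disagreementTimes (μ : Measure X) (f f' : A ⊕ B → Set X) (δ : ℝ)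
    (s : Finset A × Finset B) : Set ℝ :=
  {t | DeltaCond μ f δ s ∧ ¬(memFiltI μ f t s ↔ memFiltI μ f' t s)}

lemma symmDiff_barDelta_subset {δ : ℝ} (hΔ : ∀ s, DeltaCond μ f δ s ↔ DeltaCond μ f' δ s)
    (s : Finset A × Finset B) :
    barDelta μ f δ s ∆ barDelta μ f' δ s ⊆ ⋃ s', disagreementTimes μ f f' δ s' := by
  intro t ht
  by_contra hagree
  simp only [mem_iUnion, disagreementTimes, mem_ofPred_eq, not_exists, not_and, not_not]
    at hagree
  have hposet : {s' | memFiltI μ f t s' ∧ DeltaCond μ f δ s'} =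
      {s' | memFiltI μ f' t s' ∧ DeltaCond μ f' δ s'} := by
    ext s'
    simp only [mem_ofPred_eq, ← hΔ s']
    exact ⟨fun h => ⟨(hagree s' h.2).1 h.1, h.2⟩, fun h => ⟨(hagree s' h.2).2 h.1, h.2⟩⟩
  rw [mem_symmDiff] at ht
  simp only [barDelta, mem_ofPred_eq, hposet] at ht
  tauto

variable [Fintype A] [Fintype B] [IsProbabilityMeasure μ] {ε δ : ℝ}

lemma volume_disagreementTimes_le (hε0 : 0 < ε) (hε1 : ε ≤ 1) (hδ0 : 0 < δ) (hδ1 : δ ≤ 1)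
    (hf : Granular μ f ε) (hf' : Granular μ f' ε)
    (hΔ : ∀ s, DeltaCond μ f δ s ↔ DeltaCond μ f' δ s) (s : Finset A × Finset B) :
    volume (disagreementTimes μ f f' δ s) ≤ ENNReal.ofReal (2 * dataDist μ f f' / (δ * ε)) := by
  by_cases hs : DeltaCond μ f δ s
  · have hδε : 0 < δ * ε := mul_pos hδ0 hε0
    have hq := mul_le_qOf_of_deltaCond hε1 hδ0.le hδ1 hf hs
    have hq' := mul_le_qOf_of_deltaCond hε1 hδ0.le hδ1 hf' ((hΔ s).1 hs)
    have hsub : disagreementTimes μ f f' δ s ⊆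
        {t | ¬(1 - pOf μ f s / qOf μ f s.1 ≤ t ↔ 1 - pOf μ f' s / qOf μ f' s.1 ≤ t)} := by
      rintro t ⟨-, ht⟩
      rwa [memFiltI_iff (hδε.trans_le hq), memFiltI_iff (hδε.trans_le hq')] at ht
    refine (measure_mono hsub).trans ?_
    rw [volume_setOf_not_le_iff_le, sub_sub_sub_cancel_left, abs_sub_comm]
    exact ENNReal.ofReal_le_ofReal <| abs_div_sub_div_le ENNReal.toReal_nonneg (pOf_le_qOf s)
      (hδε.trans_le hq) hδε hq' (abs_pOf_sub_le_dataDist s) (abs_qOf_sub_le_dataDist s.1)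
  · simp [disagreementTimes, hs]

lemma volume_symmDiff_barDelta_le (hε0 : 0 < ε) (hε1 : ε ≤ 1) (hδ0 : 0 < δ) (hδ1 : δ ≤ 1)
    (hf : Granular μ f ε) (hf' : Granular μ f' ε)
    (hΔ : ∀ s, DeltaCond μ f δ s ↔ DeltaCond μ f' δ s) (s : Finset A × Finset B) :
    volume (barDelta μ f δ s ∆ barDelta μ f' δ s) ≤
      ENNReal.ofReal (Fintype.card (Finset A × Finset B) * (2 * dataDist μ f f' / (δ * ε))) :=
  calc _ ≤ volume (⋃ s', disagreementTimes μ f f' δ s') :=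
        measure_mono (symmDiff_barDelta_subset hΔ s)
    _ ≤ ∑ s', volume (disagreementTimes μ f f' δ s') := measure_iUnion_fintype_le _ _
    _ ≤ ∑ _s' : Finset A × Finset B, ENNReal.ofReal (2 * dataDist μ f f' / (δ * ε)) :=
        Finset.sum_le_sum fun s' _ =>
          volume_disagreementTimes_le hε0 hε1 hδ0 hδ1 hf hf' hΔ s'
    _ = _ := by
        rw [Finset.sum_const, nsmul_eq_mul, Finset.card_univ,
          ENNReal.ofReal_mul (Nat.cast_nonneg _), ENNReal.ofReal_natCast]

end DataMaps

/-- Stability of sequent barcodes: for `0 < ε ≤ 1`, `0 < δ ≤ 1` and finite variable sets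
`V_A, V_S`, there is a constant `C > 0` (depending only on `card V_A`, `card V_S`, `ε`, `δ`)
such that for any probability space and any pair of `ε`-granular data maps `f, f'` having the
same set `𝒮_δ` of sequents satisfying the `δ`-condition, the barcode distance
`Σ_{s ∈ 𝒮_δ} λ(I_s(ℱ_δ(f)) Δ I_s(ℱ_δ(f')))` is at most `C · data-dist(f,f')`. -/
theorem barcode_dist_le_const_mul_dataDist (A B : Type) [Fintype A] [Fintype B]
    (ε δ : ℝ) (hε0 : 0 < ε) (hε1 : ε ≤ 1) (hδ0 : 0 < δ) (hδ1 : δ ≤ 1) :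
    ∃ C > (0:ℝ), ∀ (X : Type) [MeasurableSpace X] (μ : Measure X)
      [IsProbabilityMeasure μ] (f f' : A ⊕ B → Set X),
      (∀ v, MeasurableSet (f v)) → (∀ v, MeasurableSet (f' v)) →
      Granular μ f ε → Granular μ f' ε →
      {s : Finset A × Finset B | DeltaCond μ f δ s} =
        {s : Finset A × Finset B | DeltaCond μ f' δ s} →
      ∑ s ∈ (Set.toFinite {s : Finset A × Finset B | DeltaCond μ f δ s}).toFinset,
          (volume (symmDiff (barDelta μ f δ s) (barDelta μ f' δ s))).toReal ≤
        C * dataDist μ f f' := by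
  set N := Fintype.card (Finset A × Finset B)
  have hN : 0 < N := Fintype.card_pos
  refine ⟨N ^ 2 * 2 / (δ * ε), by positivity, ?_⟩
  intro X _ μ _ f f' _ _ hf hf' hS
  have hΔ : ∀ s, DeltaCond μ f δ s ↔ DeltaCond μ f' δ s := fun s => Set.ext_iff.1 hS s
  have hK : 0 ≤ dataDist μ f f' := dataDist_nonneg
  calc _ ≤ ∑ _s ∈ (Set.toFinite {s : Finset A × Finset B | DeltaCond μ f δ s}).toFinset,
          (N : ℝ) * (2 * dataDist μ f f' / (δ * ε)) :=
        Finset.sum_le_sum fun s _ => ENNReal.toReal_le_of_le_ofReal (by positivity)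
          (volume_symmDiff_barDelta_le hε0 hε1 hδ0 hδ1 hf hf' hΔ s)
    _ ≤ N * (N * (2 * dataDist μ f f' / (δ * ε))) := by
        rw [Finset.sum_const, nsmul_eq_mul]
        gcongr
        exact_mod_cast Finset.card_le_univ _
    _ = _ := by ring
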